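/- Let D ⊆ ℝ^p be measurable, φ : D → ℝ with φ(x) ≥ 0 and ∫_D φ(x) dx < ∞, κ a probability density on D, C > 0 with φ(x)/κ(x) < C for all x ∈ D, and a > 1. Let K ~ Poisson(aC) and x_1, x_2, … i.i.d. with density κ, independent of K. Then the estimator L̂_φ = ∏_{i=1}^K (1 - φ(x_i)/(a C κ(x_i))) satisfies E[L̂_φ] = exp(-∫_D φ(x) dx). -/

import Mathlib

/-!
Write `q = φ / (aCκ)`, so that `q ∈ [0, 1]` on `D` and the estimator is `∏_{i<K} (1 - q(xᵢ))`.
Importance sampling gives `E[q(xᵢ)] = ∫_D φ / (aC)`. On the event `{K = k}` the estimator is a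
product of `k` independent factors, each independent of `K`, so its contribution to the mean is
`P(K = k) (1 - ∫_D φ / (aC))^k`. Summing over `k` evaluates the Poisson generating function
`E[s^K] = exp (aC (s - 1))` at `s = 1 - ∫_D φ / (aC)`, which is `exp (-∫_D φ)`.
-/

open MeasureTheory Set ProbabilityTheory

open scoped ENNReal

namespace ProbabilityTheory

variable {Ω : Type*} [MeasurableSpace Ω] {μ : Measure Ω}

lemma iIndepFun.sumElim_comp {ι ι' : Type*} {β : ι ⊕ ι' → Type*}
    {m : ∀ j, MeasurableSpace (β j)} {Y : ∀ j, Ω → β j} (h : iIndepFun Y μ)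
    {g : ∀ a, β (.inl a) → ℝ} {f : ∀ b, β (.inr b) → ℝ}
    (hg : ∀ a, Measurable (g a)) (hf : ∀ b, Measurable (f b)) :
    iIndepFun (Sum.elim (fun a ω => g a (Y (.inl a) ω)) fun b ω => f b (Y (.inr b) ω)) μ := by
  convert h.comp (fun j => Sum.rec (motive := fun j => β j → ℝ) g f j)
    (by rintro (a | b); exacts [hg a, hf b]) using 1
  funext j
  cases j <;> rfl

lemma iIndepFun.integral_mul_prod_range {Y : Ω → ℝ} {Z : ℕ → Ω → ℝ}
    (h : iIndepFun (Sum.elim (fun _ : Unit => Y) Z) μ) (hY : AEStronglyMeasurable Y μ)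
    (hZ : ∀ i, AEStronglyMeasurable (Z i) μ) (k : ℕ) :
    ∫ ω, Y ω * ∏ i ∈ Finset.range k, Z i ω ∂μ
      = (∫ ω, Y ω ∂μ) * ∏ i ∈ Finset.range k, ∫ ω, Z i ω ∂μ := by
  have hk := (h.precomp (g := Sum.map id (Fin.val : Fin k → ℕ))
    (Sum.map_injective.2 ⟨Function.injective_id, Fin.val_injective⟩)
    ).integral_fun_prod_eq_prod_integral (by rintro (_ | i) <;> simp [hY, hZ])
  simp only [Fintype.prod_sum_type, Finset.univ_unique, Finset.prod_singleton, Sum.elim_inl,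
    Sum.elim_inr, Sum.map_inl, Sum.map_inr, id] at hk
  simpa only [Finset.prod_range] using hk

lemma iIndepFun.setIntegral_prod_range {K : Ω → ℕ} {Z : ℕ → Ω → ℝ} {k : ℕ}
    (h : iIndepFun (Sum.elim (fun _ : Unit => {ω | K ω = k}.indicator 1) Z) μ)
    (hK : Measurable K) (hZ : ∀ i, AEStronglyMeasurable (Z i) μ) :
    ∫ ω in {ω | K ω = k}, ∏ i ∈ Finset.range k, Z i ω ∂μ
      = μ.real {ω | K ω = k} * ∏ i ∈ Finset.range k, ∫ ω, Z i ω ∂μ := by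
  have hKk : MeasurableSet {ω | K ω = k} := hK (measurableSet_singleton k)
  rw [← integral_indicator_one hKk, ← integral_indicator hKk,
    ← h.integral_mul_prod_range (stronglyMeasurable_one.indicator hKk).aestronglyMeasurable hZ k]
  congr 1 with ω
  simp only [Set.indicator_apply, Pi.one_apply, ite_mul, one_mul, zero_mul]

end ProbabilityTheory

section Fibers

variable {Ω ι E : Type*} [MeasurableSpace Ω] {μ : Measure Ω} [Countable ι] [MeasurableSpace ι]
  [MeasurableSingletonClass ι] {K : Ω → ι}

lemma measurable_apply_of_countable {γ : Type*} [MeasurableSpace γ] (hK : Measurable K)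
    {F : ι → Ω → γ} (hF : ∀ k, Measurable (F k)) : Measurable fun ω => F (K ω) ω :=
  (measurable_from_prod_countable_right (f := fun p : ι × Ω => F p.1 p.2) hF).comp
    (hK.prodMk measurable_id)

lemma integral_eq_tsum_setIntegral_fiber [NormedAddCommGroup E] [NormedSpace ℝ E]
    (hK : Measurable K) {F : ι → Ω → E} (hF : Integrable (fun ω => F (K ω) ω) μ) :
    ∫ ω, F (K ω) ω ∂μ = ∑' k, ∫ ω in {ω | K ω = k}, F k ω ∂μ := by
  have hfib : ∀ k, MeasurableSet {ω | K ω = k} := fun k => hK (measurableSet_singleton k)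
  have hcover : (⋃ k, {ω | K ω = k}) = univ := by ext ω; simp
  rw [← setIntegral_univ, ← hcover, integral_iUnion hfib _ (hcover ▸ hF.integrableOn)]
  · refine tsum_congr fun k => setIntegral_congr_fun (hfib k) fun ω hω => ?_
    rw [show K ω = k from hω]
  · intro k l hkl
    exact Set.disjoint_left.2 fun ω hk hl => hkl (hk.symm.trans hl)

end Fibers

section Density

variable {Ω E : Type*} [MeasurableSpace Ω] [MeasurableSpace E] {μ : Measure Ω} {ν : Measure E}
  {D : Set E} {X : Ω → E}

lemma ae_mem_of_map_eq_withDensity (hD : MeasurableSet D) (hX : AEMeasurable X μ)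
    {ρ : E → ℝ≥0∞} (hlaw : μ.map X = (ν.restrict D).withDensity ρ) : ∀ᵐ ω ∂μ, X ω ∈ D :=
  ae_of_ae_map hX <| hlaw ▸ (withDensity_absolutelyContinuous _ ρ).ae_le (ae_restrict_mem hD)

lemma integral_comp_eq_setIntegral_mul (hD : MeasurableSet D) (hX : AEMeasurable X μ)
    {κ : E → ℝ} (hκ : Measurable κ) (hκ0 : ∀ x ∈ D, 0 ≤ κ x)
    (hlaw : μ.map X = (ν.restrict D).withDensity fun x => ENNReal.ofReal (κ x))
    {g : E → ℝ} (hg : Measurable g) :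
    ∫ ω, g (X ω) ∂μ = ∫ x in D, κ x * g x ∂ν := by
  rw [← integral_map hX hg.aestronglyMeasurable, hlaw,
    integral_withDensity_eq_integral_toReal_smul hκ.ennreal_ofReal
      (ae_of_all _ fun _ => ENNReal.ofReal_lt_top)]
  refine setIntegral_congr_fun hD fun x hx => ?_
  rw [ENNReal.toReal_ofReal (hκ0 x hx), smul_eq_mul]

lemma integral_div_mul_comp_eq_setIntegral_div (hD : MeasurableSet D) (hX : AEMeasurable X μ)
    {κ : E → ℝ} (hκ : Measurable κ) (hκ0 : ∀ x ∈ D, 0 < κ x)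
    (hlaw : μ.map X = (ν.restrict D).withDensity fun x => ENNReal.ofReal (κ x))
    {φ : E → ℝ} (hφ : Measurable φ) (c : ℝ) :
    ∫ ω, φ (X ω) / (c * κ (X ω)) ∂μ = (∫ x in D, φ x ∂ν) / c := by
  rw [integral_comp_eq_setIntegral_mul hD hX hκ (fun x hx => (hκ0 x hx).le) hlaw
    (g := fun x => φ x / (c * κ x)) (by fun_prop),
    ← integral_div]
  refine setIntegral_congr_fun hD fun x hx => ?_
  have := (hκ0 x hx).ne'
  field_simp

end Density

lemma div_mul_mul_mem_unitInterval {u v a C : ℝ} (hu : 0 ≤ u) (hv : 0 < v) (ha : 1 ≤ a)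
    (huv : u / v ≤ C) : u / (a * C * v) ∈ unitInterval := by
  have hCv : u ≤ C * v := (div_le_iff₀ hv).1 huv
  have hle : u ≤ a * C * v := by nlinarith
  exact unitInterval.div_mem hu (hu.trans hle) hle

lemma hasSum_exp_neg_mul_pow_div_factorial_mul_pow (r m : ℝ) :
    HasSum (fun k : ℕ => Real.exp (-r) * r ^ k / k.factorial * m ^ k)
      (Real.exp (r * (m - 1))) := by
  have h := (NormedSpace.expSeries_div_hasSum_exp (r * m)).mul_left (Real.exp (-r))
  rw [← Real.exp_eq_exp_ℝ, ← Real.exp_add] at h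
  rw [show r * (m - 1) = -r + r * m by ring]
  exact h.congr_fun fun k => by rw [mul_pow]; ring

theorem integral_prod_range_eq_exp_of_poisson {Ω : Type*} [MeasurableSpace Ω] {μ : Measure Ω}
    [IsProbabilityMeasure μ] {K : Ω → ℕ} {Z : ℕ → Ω → ℝ} {r m : ℝ} (hr : 0 ≤ r)
    (hK : Measurable K) (hZ : ∀ i, Measurable (Z i))
    (hlaw : ∀ k, μ {ω | K ω = k} = ENNReal.ofReal (Real.exp (-r) * r ^ k / k.factorial))
    (hindep : ∀ k, iIndepFun (Sum.elim (fun _ : Unit => {ω | K ω = k}.indicator 1) Z) μ)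
    (hmean : ∀ i, ∫ ω, Z i ω ∂μ = m) (hbound : ∀ᵐ ω ∂μ, ∀ i, Z i ω ∈ unitInterval) :
    ∫ ω, ∏ i ∈ Finset.range (K ω), Z i ω ∂μ = Real.exp (r * (m - 1)) := by
  have hint : Integrable (fun ω => ∏ i ∈ Finset.range (K ω), Z i ω) μ :=
    .of_mem_Icc 0 1 (measurable_apply_of_countable hK
      (F := fun k ω => ∏ i ∈ Finset.range k, Z i ω) fun k => by fun_prop).aemeasurable <|
      hbound.mono fun ω hω => unitInterval.prod_mem fun i _ => hω i
  calc ∫ ω, ∏ i ∈ Finset.range (K ω), Z i ω ∂μ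
      = ∑' k, ∫ ω in {ω | K ω = k}, ∏ i ∈ Finset.range k, Z i ω ∂μ :=
        integral_eq_tsum_setIntegral_fiber (F := fun k ω => ∏ i ∈ Finset.range k, Z i ω) hK hint
    _ = ∑' k : ℕ, Real.exp (-r) * r ^ k / k.factorial * m ^ k := by
        congr with k
        rw [(hindep k).setIntegral_prod_range hK fun i => (hZ i).aestronglyMeasurable,
          measureReal_def, hlaw, ENNReal.toReal_ofReal (by positivity)]
        simp only [hmean, Finset.prod_const, Finset.card_range]
    _ = Real.exp (r * (m - 1)) := (hasSum_exp_neg_mul_pow_div_factorial_mul_pow r m).tsum_eq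

theorem poisson_estimator_unbiased {p : ℕ}
    (D : Set (EuclideanSpace ℝ (Fin p))) (hD : MeasurableSet D)
    (φ κ : EuclideanSpace ℝ (Fin p) → ℝ)
    (hφmeas : Measurable φ) (hκmeas : Measurable κ)
    (hφ0 : ∀ x ∈ D, 0 ≤ φ x)
    (hκ0 : ∀ x ∈ D, 0 < κ x)
    (C : ℝ) (hC : 0 < C) (hCb : ∀ x ∈ D, φ x / κ x < C)
    (a : ℝ) (ha : 1 < a)
    {Ω : Type*} [MeasureSpace Ω] [IsProbabilityMeasure (ℙ : Measure Ω)]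
    (K : Ω → ℕ) (X : ℕ → Ω → EuclideanSpace ℝ (Fin p))
    (hKmeas : Measurable K) (hXmeas : ∀ i, Measurable (X i))
    (hK : ∀ k : ℕ, (ℙ : Measure Ω) {ω | K ω = k}
      = ENNReal.ofReal (Real.exp (-(a * C)) * (a * C) ^ k / (Nat.factorial k : ℝ)))
    (hX : ∀ i, Measure.map (X i) ℙ
      = (volume.restrict D).withDensity (fun x => ENNReal.ofReal (κ x)))
    (hindep : iIndepFun
      (β := fun j : Unit ⊕ ℕ =>
        match j with
        | Sum.inl _ => ℕ
        | Sum.inr _ => EuclideanSpace ℝ (Fin p))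
      (m := fun j : Unit ⊕ ℕ =>
        match j with
        | Sum.inl _ => (inferInstance : MeasurableSpace ℕ)
        | Sum.inr _ => (inferInstance : MeasurableSpace (EuclideanSpace ℝ (Fin p))))
      (fun j : Unit ⊕ ℕ =>
        match j with
        | Sum.inl _ => K
        | Sum.inr i => X i) ℙ) :
    (∫ ω, ∏ i ∈ Finset.range (K ω), (1 - φ (X i ω) / (a * C * κ (X i ω))) ∂ℙ)
      = Real.exp (-(∫ x in D, φ x)) := by
  set q : EuclideanSpace ℝ (Fin p) → ℝ := fun x => φ x / (a * C * κ x)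
  show ∫ ω, ∏ i ∈ Finset.range (K ω), (1 - q (X i ω)) ∂ℙ = _
  have hf : Measurable fun x => 1 - q x := by fun_prop
  have hqX : ∀ i, ∀ᵐ ω ∂(ℙ : Measure Ω), q (X i ω) ∈ unitInterval := fun i =>
    (ae_mem_of_map_eq_withDensity hD (hXmeas i).aemeasurable (hX i)).mono fun _ hx =>
      div_mul_mul_mem_unitInterval (hφ0 _ hx) (hκ0 _ hx) ha.le (hCb _ hx).le
  have hmean : ∀ i, ∫ ω, 1 - q (X i ω) ∂ℙ = 1 - (∫ x in D, φ x) / (a * C) := fun i => by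
    rw [integral_sub (integrable_const 1) (.of_mem_Icc 0 1 (by fun_prop) (hqX i)),
      integral_const, probReal_univ, one_smul, integral_div_mul_comp_eq_setIntegral_div hD
        (hXmeas i).aemeasurable hκmeas hκ0 (hX i) hφmeas]
  -- `{k}.indicator 1 ∘ K` is `{ω | K ω = k}.indicator 1` definitionally.
  refine (integral_prod_range_eq_exp_of_poisson (by positivity) hKmeas
    (fun i => hf.comp (hXmeas i)) hK
    (fun k => hindep.sumElim_comp (g := fun _ => ({k} : Set ℕ).indicator 1)
      (f := fun _ x => 1 - q x) (fun _ => measurable_of_countable _) fun _ => hf) hmean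
    ((ae_all_iff.2 hqX).mono fun ω hω i => Icc.mem_iff_one_sub_mem.mp (hω i))).trans ?_
  congr 1
  field_simp
  ring
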